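/- arXiv:1408.6589 — 3 statements merged into one kernel-verified Lean document; each statement's English description precedes it below -/
import Mathlib

section
/- Let i, i' ∈ {1,…,n}^K be two index tuples that agree exactly on a subset S ⊆ {1,…,K} (that is, i_k = i'_k if and only if k ∈ S). Define the random variables X = ρ_B(L_{1,i_1}, …, L_{K,i_K}) and X' = ρ_B(L_{1,i'_1}, …, L_{K,i'_K}). Then Cov(X, X') = |Λ(S)|⁻¹ · Σ_{l ∈ Λ(S)} (ρ_S(l) − ρ)², i.e., Cov(X, X') = σ_S². -/
open MeasureTheory ProbabilityTheory Finset

noncomputable section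

/-- `Λ`, the set of block-index tuples. -/
def Lam (K : ℕ) (m : Fin K → ℕ) : Type := ∀ k, Fin (m k)

instance (K : ℕ) (m : Fin K → ℕ) : Fintype (Lam K m) := by unfold Lam; infer_instance
instance (K : ℕ) (m : Fin K → ℕ) : DecidableEq (Lam K m) := by unfold Lam; infer_instance

/-- `Λ(S)`, block-index tuples restricted to the coordinates in `S`. -/
def LamS (K : ℕ) (m : Fin K → ℕ) (S : Finset (Fin K)) : Type := ∀ k : S, Fin (m k)

instance (K : ℕ) (m : Fin K → ℕ) (S : Finset (Fin K)) : Fintype (LamS K m S) := by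
  unfold LamS; infer_instance

/-- The mean `ρ = |Λ|⁻¹ Σ_{b∈Λ} ρ_B(b)`. -/
def lamMean (K : ℕ) (m : Fin K → ℕ) (ρB : Lam K m → ℝ) : ℝ :=
  (Fintype.card (Lam K m) : ℝ)⁻¹ * ∑ b, ρB b

instance (K : ℕ) (m : Fin K → ℕ) (S : Finset (Fin K)) (l : LamS K m S) (b : Lam K m) :
    DecidablePred fun k : S => b ↑k = l k := fun k => instDecidableEqFin _ _ _

/-- `ρ_S(l)`: the average of `ρ_B(b)` over all `b ∈ Λ` whose coordinates in `S` equal `l`. -/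
def rhoS (K : ℕ) (m : Fin K → ℕ) (ρB : Lam K m → ℝ) (S : Finset (Fin K))
    (l : LamS K m S) : ℝ :=
  ((Finset.univ.filter (fun b : Lam K m => ∀ k : S, b ↑k = l k)).card : ℝ)⁻¹ *
    ∑ b ∈ Finset.univ.filter (fun b : Lam K m => ∀ k : S, b ↑k = l k), ρB b

/-- `σ_S² = |Λ(S)|⁻¹ Σ_{l∈Λ(S)} (ρ_S(l) − ρ)²`. -/
def sigmaSq (K : ℕ) (m : Fin K → ℕ) (ρB : Lam K m → ℝ) (S : Finset (Fin K)) : ℝ :=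
  (Fintype.card (LamS K m S) : ℝ)⁻¹ *
    ∑ l : LamS K m S, (rhoS K m ρB S l - lamMean K m ρB) ^ 2

/-- The sample space `Ω = Π_{k=1}^{K} Π_{i=1}^{n} Fin m_k`. -/
def Samp (K n : ℕ) (m : Fin K → ℕ) : Type := ∀ k : Fin K, Fin n → Fin (m k)

instance (K n : ℕ) (m : Fin K → ℕ) : Fintype (Samp K n m) := by unfold Samp; infer_instance
instance (K n : ℕ) (m : Fin K → ℕ) : MeasurableSpace (Samp K n m) := ⊤

/-- The uniform probability measure on the sample space. -/
def unif (K n : ℕ) (m : Fin K → ℕ) : Measure (Samp K n m) :=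
  (Fintype.card (Samp K n m) : ENNReal)⁻¹ • Measure.count

/-- Covariance of two real random variables. -/
def cov {Ω : Type*} [MeasurableSpace Ω] (μ : Measure Ω) (X Y : Ω → ℝ) : ℝ :=
  ∫ ω, (X ω - ∫ x, X x ∂μ) * (Y ω - ∫ x, Y x ∂μ) ∂μ

-- Auxiliary machinery
instance (K n : ℕ) (m : Fin K → ℕ) : MeasurableSingletonClass (Samp K n m) :=
  ⟨fun _ => trivial⟩

instance (K n : ℕ) (m : Fin K → ℕ) : DecidableEq (Samp K n m) := by
  unfold Samp; infer_instance

instance (K : ℕ) (m : Fin K → ℕ) (S : Finset (Fin K)) (a b : Lam K m) :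
    Decidable (∀ k ∈ S, a k = b k) :=
  @Nat.decidableForallFin K _ (fun k => inferInstanceAs (Decidable (k ∈ S → (a k : Fin (m k)) = b k)))

instance (K n : ℕ) (m : Fin K → ℕ) (j : Fin K → Fin n) (t : Lam K m) :
    DecidablePred fun ω : Samp K n m => (fun k => ω k (j k)) = t :=
  fun _ => Fintype.decidablePiFintype _ _

lemma integral_unif (K n : ℕ) (m : Fin K → ℕ) (f : Samp K n m → ℝ) :
    ∫ ω, f ω ∂(unif K n m) = (Fintype.card (Samp K n m) : ℝ)⁻¹ * ∑ ω, f ω := by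
  rw [unif, integral_smul_measure, integral_fintype Integrable.of_finite]
  simp only [Measure.count_singleton, ENNReal.toReal_one, one_smul, smul_eq_mul]
  simp [ENNReal.toReal_inv]

lemma card_samp (K n : ℕ) (m : Fin K → ℕ) :
    Fintype.card (Samp K n m) = ∏ k, m k ^ n := by
  show Fintype.card (∀ k : Fin K, Fin n → Fin (m k)) = _
  rw [Fintype.card_pi]
  exact Finset.prod_congr rfl fun k _ => by rw [Fintype.card_fun]; simp

lemma card_lam (K : ℕ) (m : Fin K → ℕ) :
    Fintype.card (Lam K m) = ∏ k, m k := by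
  show Fintype.card (∀ k : Fin K, Fin (m k)) = _
  rw [Fintype.card_pi]; simp

section Counting
variable {α β : Type*} [Fintype α] [DecidableEq α] [Fintype β] [DecidableEq β]

def constrEquiv (j : α) (x : β) : {v : α → β // v j = x} ≃ ({a : α // a ≠ j} → β) where
  toFun v a := v.1 a
  invFun w := ⟨fun a => if h : a = j then x else w ⟨a, h⟩, by simp⟩
  left_inv v := by
    ext a
    by_cases h : a = j
    · subst h; simpa using v.2.symm
    · simp [h]
  right_inv w := by ext a; simp [a.2]

lemma card_subtype_ne (j : α) : Fintype.card {a : α // a ≠ j} = Fintype.card α - 1 := by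
  simp [Fintype.card_subtype_compl]

lemma card_filter_eval (j : α) (x : β) :
    (univ.filter fun v : α → β => v j = x).card
      = Fintype.card β ^ (Fintype.card α - 1) := by
  rw [← Fintype.card_subtype, Fintype.card_congr (constrEquiv j x), Fintype.card_fun,
    card_subtype_ne]

def constrEquiv2 (j j' : α) (hjj : j ≠ j') (x y : β) :
    {v : α → β // v j = x ∧ v j' = y} ≃ ({a : α // a ≠ j ∧ a ≠ j'} → β) where
  toFun v a := v.1 a
  invFun w := ⟨fun a => if h : a = j then x else if h' : a = j' then y else w ⟨a, h, h'⟩,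
    by constructor <;> simp [hjj, Ne.symm hjj]⟩
  left_inv v := by
    ext a
    by_cases h : a = j
    · subst h; simpa using v.2.1.symm
    · by_cases h' : a = j'
      · subst h'; simpa [h] using v.2.2.symm
      · simp [h, h']
  right_inv w := by ext a; simp [a.2.1, a.2.2]

lemma card_subtype_ne2 (j j' : α) (hjj : j ≠ j') :
    Fintype.card {a : α // a ≠ j ∧ a ≠ j'} = Fintype.card α - 2 := by
  have h1 : ∀ a : α, (a ≠ j ∧ a ≠ j') ↔ ¬(a = j ∨ a = j') := fun a => not_or.symm
  rw [Fintype.card_subtype]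
  have : (univ.filter fun a : α => a ≠ j ∧ a ≠ j')
      = univ \ (univ.filter fun a : α => a = j ∨ a = j') := by
    ext a; simp [not_or]
  rw [this, card_sdiff_of_subset (filter_subset _ _), card_univ]
  congr 1
  have : (univ.filter fun a : α => a = j ∨ a = j') = {j, j'} := by
    ext a; simp
  rw [this, card_insert_of_notMem (by simpa using hjj), card_singleton]

lemma card_filter_eval2 (j j' : α) (hjj : j ≠ j') (x y : β) :
    (univ.filter fun v : α → β => v j = x ∧ v j' = y).card
      = Fintype.card β ^ (Fintype.card α - 2) := by
  rw [← Fintype.card_subtype, Fintype.card_congr (constrEquiv2 j j' hjj x y),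
    Fintype.card_fun, card_subtype_ne2 j j' hjj]

lemma sum_comp_fiber {α γ : Type*} [Fintype α] [Fintype γ] [DecidableEq γ]
    (φ : α → γ) (G : γ → ℝ) :
    ∑ a, G (φ a) = ∑ t, ((univ.filter fun a => φ a = t).card : ℝ) * G t := by
  rw [← Finset.sum_fiberwise_of_maps_to (fun a _ => mem_univ (φ a)) (fun a => G (φ a))]
  refine Finset.sum_congr rfl fun t _ => ?_
  rw [Finset.sum_congr rfl (fun a ha => by rw [(mem_filter.mp ha).2]), Finset.sum_const,
    nsmul_eq_mul]

lemma card_pi_fiber {K : ℕ} {V γ : Fin K → Type*} [∀ k, Fintype (V k)]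
    [∀ k, DecidableEq (V k)] [∀ k, Fintype (γ k)] [∀ k, DecidableEq (γ k)]
    (φ : ∀ k, V k → γ k) (t : ∀ k, γ k) :
    (univ.filter fun ω : ∀ k, V k => (fun k => φ k (ω k)) = t).card
      = ∏ k, (univ.filter fun v : V k => φ k v = t k).card := by
  rw [← Fintype.card_subtype]
  have e : {ω : ∀ k, V k // (fun k => φ k (ω k)) = t} ≃ ∀ k, {v : V k // φ k v = t k} :=
    (Equiv.subtypeEquivRight (fun ω => funext_iff)).trans (Equiv.subtypePiEquivPi (p := fun k (v : V k) => φ k v = t k))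
  rw [Fintype.card_congr e, Fintype.card_pi]
  exact Finset.prod_congr rfl fun k _ => Fintype.card_subtype _

def pairEquiv {K : ℕ} (γ δ : Fin K → Type*) :
    (∀ k, γ k × δ k) ≃ (∀ k, γ k) × (∀ k, δ k) where
  toFun t := (fun k => (t k).1, fun k => (t k).2)
  invFun p k := (p.1 k, p.2 k)
  left_inv t := rfl
  right_inv p := rfl

end Counting

instance (K : ℕ) (m : Fin K → ℕ) (S : Finset (Fin K)) : DecidableEq (LamS K m S) := by
  unfold LamS; infer_instance

def fibEquiv (K : ℕ) (m : Fin K → ℕ) (S : Finset (Fin K)) (l : LamS K m S) :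
    {b : Lam K m // ∀ k : S, b ↑k = l k} ≃ (∀ k : ↥(Sᶜ), Fin (m (k : Fin K))) where
  toFun b k := b.1 k
  invFun w := ⟨fun k => if h : k ∈ S then l ⟨k, h⟩
      else w ⟨k, Finset.mem_compl.mpr h⟩, fun k => by simp [k.2]⟩
  left_inv b := by
    refine Subtype.ext (funext fun k => ?_)
    by_cases h : k ∈ S
    · simpa [h] using (b.2 ⟨k, h⟩).symm
    · simp [h]
  right_inv w := by
    funext k
    have hk : (k : Fin K) ∉ S := Finset.mem_compl.mp k.2
    simp [hk]

lemma card_fib (K : ℕ) (m : Fin K → ℕ) (S : Finset (Fin K)) (l : LamS K m S) :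
    (univ.filter fun b : Lam K m => ∀ k : S, b ↑k = l k).card = ∏ k ∈ Sᶜ, m k := by
  rw [← Fintype.card_subtype, Fintype.card_congr (fibEquiv K m S l), Fintype.card_pi]
  rw [← Finset.prod_coe_sort Sᶜ (fun k => m k)]
  simp

lemma card_lamS (K : ℕ) (m : Fin K → ℕ) (S : Finset (Fin K)) :
    Fintype.card (LamS K m S) = ∏ k ∈ S, m k := by
  show Fintype.card (∀ k : S, Fin (m k)) = _
  rw [Fintype.card_pi, ← Finset.prod_coe_sort S (fun k => m k)]
  simp

def resS (K : ℕ) (m : Fin K → ℕ) (S : Finset (Fin K)) (b : Lam K m) : LamS K m S :=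
  fun k => b ↑k

def Tsum (K : ℕ) (m : Fin K → ℕ) (ρB : Lam K m → ℝ) (S : Finset (Fin K)) (c : ℝ)
    (l : LamS K m S) : ℝ :=
  ∑ b ∈ Finset.univ.filter (fun b : Lam K m => ∀ k : S, b ↑k = l k), (ρB b - c)

set_option maxHeartbeats 1000000 in
/-- if the index tuples `i, i'` agree exactly on `S`, then the covariance
of `X = ρ_B(L_{1,i_1},…,L_{K,i_K})` and `X' = ρ_B(L_{1,i'_1},…,L_{K,i'_K})` equals `σ_S²`. -/
theorem stmt1 (K n : ℕ) (hK : 1 ≤ K) (hn : 1 ≤ n) (m : Fin K → ℕ) (hm : ∀ k, 1 ≤ m k)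
    (ρB : Lam K m → ℝ) (S : Finset (Fin K)) (i i' : Fin K → Fin n)
    (hagree : ∀ k, i k = i' k ↔ k ∈ S) :
    cov (unif K n m) (fun ω => ρB fun k => ω k (i k)) (fun ω => ρB fun k => ω k (i' k))
      = sigmaSq K m ρB S := by
  have hm0 : ∀ k, (m k : ℝ) ≠ 0 := fun k => Nat.cast_ne_zero.mpr (Nat.one_le_iff_ne_zero.mp (hm k))
  set ρ : ℝ := lamMean K m ρB with hρ
  -- the mean of each random variable is ρ
  have hfibmean : ∀ (j : Fin K → Fin n) (t : Lam K m),
      (univ.filter fun ω : Samp K n m => (fun k => ω k (j k)) = t).card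
        = ∏ k, m k ^ (n - 1) := by
    intro j t
    have h0 := card_pi_fiber (V := fun k => Fin n → Fin (m k)) (γ := fun k => Fin (m k))
      (fun k v => v (j k)) t
    exact h0.trans (Finset.prod_congr rfl fun k _ => by rw [card_filter_eval]; simp)
  have hmean : ∀ j : Fin K → Fin n,
      (∫ ω, ρB (fun k => ω k (j k)) ∂(unif K n m)) = ρ := by
    intro j
    rw [integral_unif]
    have h1 : ∑ ω : Samp K n m, ρB (fun k => ω k (j k))
        = ∑ t : Lam K m,
            ((univ.filter fun ω : Samp K n m => (fun k => ω k (j k)) = t).card : ℝ) * ρB t :=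
      sum_comp_fiber (fun ω : Samp K n m => (fun k => ω k (j k))) ρB
    rw [h1]
    simp only [hfibmean j]
    rw [← Finset.mul_sum, hρ, lamMean, card_samp, card_lam]
    have hid : (∏ k, m k ^ (n - 1)) * (∏ k, m k) = ∏ k, m k ^ n := by
      rw [← Finset.prod_mul_distrib]
      exact Finset.prod_congr rfl fun k _ => by
        rw [← pow_succ, Nat.sub_add_cancel hn]
    have h2 : ((∏ k, m k ^ n : ℕ) : ℝ) = ((∏ k, m k ^ (n-1) : ℕ) : ℝ) * ((∏ k, m k : ℕ) : ℝ) := by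
      rw [← Nat.cast_mul, hid]
    rw [h2]
    have hA : ((∏ k, m k ^ (n-1) : ℕ) : ℝ) ≠ 0 := by
      rw [Nat.cast_ne_zero]
      exact Finset.prod_ne_zero_iff.mpr fun k _ =>
        pow_ne_zero _ (Nat.one_le_iff_ne_zero.mp (hm k))
    rw [mul_inv, mul_mul_mul_comm, inv_mul_cancel₀ hA, one_mul]
  -- now the covariance
  have h2n : ∀ k, k ∉ S → 2 ≤ n := by
    intro k hk
    have hik : i k ≠ i' k := fun h => hk ((hagree k).mp h)
    have : Nontrivial (Fin n) := ⟨⟨i k, i' k, hik⟩⟩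
    exact (by simpa using Fintype.one_lt_card (α := Fin n) : 1 < n)
  set W2 : ℕ := ∏ k, if k ∈ S then m k ^ (n-1) else m k ^ (n-2) with hW2
  set D : ℕ := ∏ k ∈ Sᶜ, m k with hD
  have hD0 : (D : ℝ) ≠ 0 := by
    rw [hD, Nat.cast_ne_zero]
    exact Finset.prod_ne_zero_iff.mpr fun k _ => Nat.one_le_iff_ne_zero.mp (hm k)
  -- fiber cardinality for the pair map
  have hb : ∀ t : ∀ k, Fin (m k) × Fin (m k),
      ((univ.filter fun ω : Samp K n m => (fun k => (ω k (i k), ω k (i' k))) = t).card : ℝ)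
        = (W2 : ℝ) * (if ∀ k ∈ S, (t k).1 = (t k).2 then 1 else 0) := by
    intro t
    have h0 := card_pi_fiber (V := fun k => Fin n → Fin (m k))
      (γ := fun k => Fin (m k) × Fin (m k)) (fun k v => (v (i k), v (i' k))) t
    have h1 : ∀ k, (univ.filter fun v : Fin n → Fin (m k) => (v (i k), v (i' k)) = t k).card
        = (if k ∈ S then (if (t k).1 = (t k).2 then m k ^ (n-1) else 0) else m k ^ (n-2)) := by
      intro k
      by_cases hk : k ∈ S
      · have hik : i k = i' k := (hagree k).mpr hk
        by_cases hxy : (t k).1 = (t k).2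
        · rw [if_pos hk, if_pos hxy]
          have hfe : (univ.filter fun v : Fin n → Fin (m k) => (v (i k), v (i' k)) = t k)
              = univ.filter fun v => v (i k) = (t k).1 := by
            apply Finset.filter_congr
            intro v _
            rw [Prod.ext_iff]
            constructor
            · exact fun h => h.1
            · intro h
              exact ⟨h, by rw [← hik, h, hxy]⟩
          rw [hfe, card_filter_eval]
          simp
        · rw [if_pos hk, if_neg hxy, Finset.card_eq_zero, Finset.filter_eq_empty_iff]
          intro v _ hc
          rw [Prod.ext_iff] at hc
          exact hxy (by rw [← hc.1, ← hc.2, hik])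
      · have hik : i k ≠ i' k := fun h => hk ((hagree k).mp h)
        rw [if_neg hk]
        have hfe : (univ.filter fun v : Fin n → Fin (m k) => (v (i k), v (i' k)) = t k)
            = univ.filter fun v => v (i k) = (t k).1 ∧ v (i' k) = (t k).2 := by
          apply Finset.filter_congr
          intro v _
          rw [Prod.ext_iff]
        rw [hfe, card_filter_eval2 (i k) (i' k) hik]
        simp
    have h2 : (univ.filter fun ω : Samp K n m => (fun k => (ω k (i k), ω k (i' k))) = t).card
        = ∏ k, (if k ∈ S then (if (t k).1 = (t k).2 then m k ^ (n-1) else 0) else m k ^ (n-2)) :=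
      h0.trans (Finset.prod_congr rfl fun k _ => h1 k)
    rw [h2]
    push_cast
    have h3 : ∀ k : Fin K,
        ((if k ∈ S then (if (t k).1 = (t k).2 then (m k:ℝ) ^ (n-1) else 0) else (m k:ℝ) ^ (n-2)))
        = (if k ∈ S then (m k:ℝ) ^ (n-1) else (m k:ℝ) ^ (n-2))
            * (if k ∈ S then (if (t k).1 = (t k).2 then (1:ℝ) else 0) else 1) := by
      intro k
      split_ifs <;> ring
    rw [Finset.prod_congr rfl fun k _ => h3 k, Finset.prod_mul_distrib]
    congr 1
    · rw [hW2]; push_cast [apply_ite]; rfl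
    · rw [Finset.prod_ite_mem univ S (fun k => if (t k).1 = (t k).2 then (1:ℝ) else 0),
        Finset.univ_inter, Finset.prod_boole]
      by_cases hP : ∀ k ∈ S, (t k).1 = (t k).2 <;> simp [hP]
  have ha : (∑ ω : Samp K n m,
      ((ρB fun k => ω k (i k)) - ρ) * ((ρB fun k => ω k (i' k)) - ρ))
      = ∑ t : ∀ k, Fin (m k) × Fin (m k),
          ((univ.filter fun ω : Samp K n m => (fun k => (ω k (i k), ω k (i' k))) = t).card : ℝ)
            * (((ρB fun k => (t k).1) - ρ) * ((ρB fun k => (t k).2) - ρ)) :=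
    sum_comp_fiber (fun ω : Samp K n m => (fun k => (ω k (i k), ω k (i' k))))
      (fun t => ((ρB fun k => (t k).1) - ρ) * ((ρB fun k => (t k).2) - ρ))
  have hsum1 : (∑ t : ∀ k, Fin (m k) × Fin (m k),
      ((W2:ℝ) * (if ∀ k ∈ S, (t k).1 = (t k).2 then 1 else 0))
        * (((ρB fun k => (t k).1) - ρ) * ((ρB fun k => (t k).2) - ρ)))
      = (W2:ℝ) * ∑ a : Lam K m, ∑ b : Lam K m,
          (if ∀ k ∈ S, a k = b k then (1:ℝ) else 0) * ((ρB a - ρ) * (ρB b - ρ)) := by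
    have e := (pairEquiv (fun k => Fin (m k)) (fun k => Fin (m k))).symm
    calc (∑ t : ∀ k, Fin (m k) × Fin (m k),
        ((W2:ℝ) * (if ∀ k ∈ S, (t k).1 = (t k).2 then 1 else 0))
          * (((ρB fun k => (t k).1) - ρ) * ((ρB fun k => (t k).2) - ρ)))
        = ∑ p : Lam K m × Lam K m,
            ((W2:ℝ) * (if ∀ k ∈ S, p.1 k = p.2 k then 1 else 0))
              * ((ρB p.1 - ρ) * (ρB p.2 - ρ)) :=
          (Equiv.sum_comp (pairEquiv (fun k => Fin (m k)) (fun k => Fin (m k))).symm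
            (fun t : ∀ k, Fin (m k) × Fin (m k) =>
              ((W2:ℝ) * (if ∀ k ∈ S, (t k).1 = (t k).2 then 1 else 0))
                * (((ρB fun k => (t k).1) - ρ) * ((ρB fun k => (t k).2) - ρ)))).symm
      _ = ∑ a : Lam K m, ∑ b : Lam K m,
            ((W2:ℝ) * (if ∀ k ∈ S, a k = b k then 1 else 0)) * ((ρB a - ρ) * (ρB b - ρ)) :=
          Fintype.sum_prod_type _
      _ = (W2:ℝ) * ∑ a : Lam K m, ∑ b : Lam K m,
            (if ∀ k ∈ S, a k = b k then (1:ℝ) else 0) * ((ρB a - ρ) * (ρB b - ρ)) := by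
          rw [Finset.mul_sum]
          refine Finset.sum_congr rfl fun a _ => ?_
          rw [Finset.mul_sum]
          exact Finset.sum_congr rfl fun b _ => mul_assoc _ _ _
  have he : ∀ a : Lam K m,
      (∑ b : Lam K m, (if ∀ k ∈ S, a k = b k then (1:ℝ) else 0) * ((ρB a - ρ) * (ρB b - ρ)))
      = (ρB a - ρ) * Tsum K m ρB S ρ (resS K m S a) := by
    intro a
    simp only [boole_mul, Tsum, resS]
    rw [← Finset.sum_filter, Finset.mul_sum]
    refine Finset.sum_congr ?_ fun _ _ => rfl
    apply Finset.filter_congr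
    intro b _
    constructor
    · exact fun h k => (h k k.2).symm
    · exact fun h k hk => (h ⟨k, hk⟩).symm
  have hf : (∑ a : Lam K m, (ρB a - ρ) * Tsum K m ρB S ρ (resS K m S a))
      = ∑ l : LamS K m S, Tsum K m ρB S ρ l * Tsum K m ρB S ρ l := by
    rw [← Finset.sum_fiberwise_of_maps_to (g := resS K m S)
      (fun a _ => Finset.mem_univ _) (fun a => (ρB a - ρ) * Tsum K m ρB S ρ (resS K m S a))]
    refine Finset.sum_congr rfl fun l _ => ?_
    have hstep : ∀ a ∈ univ.filter (fun a : Lam K m => resS K m S a = l),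
        (ρB a - ρ) * Tsum K m ρB S ρ (resS K m S a) = (ρB a - ρ) * Tsum K m ρB S ρ l := by
      intro a ha
      rw [(Finset.mem_filter.mp ha).2]
    rw [Finset.sum_congr rfl hstep, ← Finset.sum_mul]
    congr 1
    show _ = Tsum K m ρB S ρ l
    simp only [Tsum]
    refine Finset.sum_congr ?_ fun _ _ => rfl
    apply Finset.filter_congr
    intro b _
    exact ⟨fun h k => congrFun h k, fun h => funext h⟩
  have hg : ∀ l : LamS K m S, Tsum K m ρB S ρ l = (D:ℝ) * (rhoS K m ρB S l - ρ) := by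
    intro l
    simp only [Tsum, rhoS, card_fib, ← hD]
    rw [Finset.sum_sub_distrib, Finset.sum_const, card_fib, ← hD, nsmul_eq_mul]
    field_simp
  -- assemble
  rw [cov, hmean i, hmean i', integral_unif, ha]
  simp only [hb]
  rw [hsum1, Finset.sum_congr rfl fun a _ => he a, hf,
    Finset.sum_congr rfl fun l _ => by rw [hg l]]
  have hsq : ∀ l : LamS K m S,
      (D:ℝ) * (rhoS K m ρB S l - ρ) * ((D:ℝ) * (rhoS K m ρB S l - ρ))
        = (D:ℝ)^2 * (rhoS K m ρB S l - ρ)^2 := fun l => by ring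
  rw [Finset.sum_congr rfl fun l _ => hsq l, ← Finset.mul_sum]
  rw [sigmaSq, ← hρ, card_lamS, card_samp]
  -- counting identity
  have hnat : W2 * (D^2 * ∏ k ∈ S, m k) = ∏ k, m k ^ n := by
    have hsplit : ∀ f : Fin K → ℕ, ∏ k, f k = (∏ k ∈ S, f k) * ∏ k ∈ Sᶜ, f k :=
      fun f => (Finset.prod_mul_prod_compl S f).symm
    have e1 : ∏ k ∈ S, (if k ∈ S then m k ^ (n-1) else m k ^ (n-2)) = ∏ k ∈ S, m k ^ (n-1) :=
      Finset.prod_congr rfl fun k hk => if_pos hk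
    have e2 : ∏ k ∈ Sᶜ, (if k ∈ S then m k ^ (n-1) else m k ^ (n-2)) = ∏ k ∈ Sᶜ, m k ^ (n-2) :=
      Finset.prod_congr rfl fun k hk => if_neg (Finset.mem_compl.mp hk)
    have e3 : ∏ k ∈ S, m k ^ (n-1) * m k = ∏ k ∈ S, m k ^ n :=
      Finset.prod_congr rfl fun k _ => by
        rw [← pow_succ, Nat.sub_add_cancel hn]
    have e4 : ∏ k ∈ Sᶜ, m k ^ (n-2) * m k ^ 2 = ∏ k ∈ Sᶜ, m k ^ n :=
      Finset.prod_congr rfl fun k hk => by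
        rw [← pow_add, Nat.sub_add_cancel (h2n k (Finset.mem_compl.mp hk))]
    rw [hW2, hD, hsplit (fun k => if k ∈ S then m k ^ (n-1) else m k ^ (n-2)),
      hsplit (fun k => m k ^ n), e1, e2, ← Finset.prod_pow]
    calc (∏ k ∈ S, m k ^ (n-1)) * (∏ k ∈ Sᶜ, m k ^ (n-2)) * ((∏ k ∈ Sᶜ, m k ^ 2) * ∏ k ∈ S, m k)
        = (∏ k ∈ S, m k ^ (n-1) * m k) * (∏ k ∈ Sᶜ, m k ^ (n-2) * m k ^ 2) := by
          rw [Finset.prod_mul_distrib, Finset.prod_mul_distrib]; ring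
      _ = _ := by rw [e3, e4]
  have hW20 : (W2 : ℝ) ≠ 0 := by
    rw [hW2, Nat.cast_ne_zero]
    refine Finset.prod_ne_zero_iff.mpr fun k _ => ?_
    split_ifs <;> exact pow_ne_zero _ (Nat.one_le_iff_ne_zero.mp (hm k))
  have hPS : ((∏ k ∈ S, m k : ℕ) : ℝ) ≠ 0 := by
    rw [Nat.cast_ne_zero]
    exact Finset.prod_ne_zero_iff.mpr fun k _ => Nat.one_le_iff_ne_zero.mp (hm k)
  rw [← hnat]
  push_cast
  have hkey : ∀ a b c : ℝ, a ≠ 0 → (a * b)⁻¹ * (a * c) = b⁻¹ * c := by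
    intro a b c hha
    rw [mul_inv, mul_mul_mul_comm, inv_mul_cancel₀ hha, one_mul]
  have hD2 : ((D:ℝ)^2) ≠ 0 := pow_ne_zero _ hD0
  rw [hkey _ _ _ hW20, hkey _ _ _ hD2]

end
end

section
/- Let ρ, b₀, b₁, b₂ ∈ ℝ. For each n, let X_n be a real random variable (all on a common probability space) whose law is Gaussian with mean ρ and variance σ_n², where σ_n² → 0 as n → ∞. Set f_n = b₀X_n² + b₁X_n + b₂, and let f_n^N be any real random variable on the same probability space whose law is Gaussian with mean E[f_n] and variance Var[f_n]. Then f_n^N − f_n → 0 in probability as n → ∞. -/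
open MeasureTheory ProbabilityTheory Filter Real
open scoped NNReal ENNReal

namespace Stmt16Aux

noncomputable def ν : Measure ℝ := gaussianReal 0 1

instance : IsProbabilityMeasure ν := by unfold ν; infer_instance

lemma integrable_pow_nu (k : ℕ) : Integrable (fun z : ℝ => z ^ k) ν := by
  have h1 : ν = volume.withDensity (gaussianPDF 0 1) :=
    gaussianReal_of_var_ne_zero 0 one_ne_zero
  rw [h1, integrable_withDensity_iff (measurable_gaussianPDF 0 1)
    (Filter.Eventually.of_forall fun x => ENNReal.ofReal_lt_top)]
  have hbase : Integrable (fun x : ℝ => x ^ k * Real.exp (-(2⁻¹ : ℝ) * x ^ 2)) volume := by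
    have := integrable_rpow_mul_exp_neg_mul_sq (b := (2⁻¹ : ℝ)) (by norm_num) (s := (k : ℝ))
      (lt_of_lt_of_le neg_one_lt_zero (Nat.cast_nonneg k))
    simpa [Real.rpow_natCast] using this
  have heq : (fun x : ℝ => x ^ k * (gaussianPDF 0 1 x).toReal)
      = fun x : ℝ => (Real.sqrt (2 * π))⁻¹ * (x ^ k * Real.exp (-(2⁻¹ : ℝ) * x ^ 2)) := by
    funext x
    rw [gaussianPDF_def, ENNReal.toReal_ofReal (gaussianPDFReal_nonneg _ _ _)]
    simp only [gaussianPDFReal_def, sub_zero, NNReal.coe_one, mul_one]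
    rw [show -x ^ 2 / 2 = -(2⁻¹ : ℝ) * x ^ 2 by ring]
    ring
  rw [heq]
  exact hbase.const_mul _

noncomputable def I (k : ℕ) : ℝ := ∫ z, z ^ k ∂ν

lemma integrable_poly (a0 a1 a2 a3 a4 : ℝ) :
    Integrable (fun z : ℝ => a0 + a1 * z + a2 * z ^ 2 + a3 * z ^ 3 + a4 * z ^ 4) ν := by
  have h : (fun z : ℝ => a0 + a1 * z + a2 * z ^ 2 + a3 * z ^ 3 + a4 * z ^ 4)
      = fun z : ℝ => a0 * z ^ 0 + a1 * z ^ 1 + a2 * z ^ 2 + a3 * z ^ 3 + a4 * z ^ 4 := by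
    funext z; ring
  rw [h]
  exact (((((integrable_pow_nu 0).const_mul a0).add
    ((integrable_pow_nu 1).const_mul a1)).add
    ((integrable_pow_nu 2).const_mul a2)).add
    ((integrable_pow_nu 3).const_mul a3)).add
    ((integrable_pow_nu 4).const_mul a4)

lemma integral_poly (a0 a1 a2 a3 a4 : ℝ) :
    ∫ z, (a0 + a1 * z + a2 * z ^ 2 + a3 * z ^ 3 + a4 * z ^ 4) ∂ν
      = a0 + a1 * I 1 + a2 * I 2 + a3 * I 3 + a4 * I 4 := by
  have h : (fun z : ℝ => a0 + a1 * z + a2 * z ^ 2 + a3 * z ^ 3 + a4 * z ^ 4)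
      = fun z : ℝ => a0 * z ^ 0 + a1 * z ^ 1 + a2 * z ^ 2 + a3 * z ^ 3 + a4 * z ^ 4 := by
    funext z; ring
  have h0 : (∫ z, z ^ 0 ∂ν) = (1 : ℝ) := by simp
  have i0 := (integrable_pow_nu 0).const_mul a0
  have i1 := (integrable_pow_nu 1).const_mul a1
  have i2 := (integrable_pow_nu 2).const_mul a2
  have i3 := (integrable_pow_nu 3).const_mul a3
  have i4 := (integrable_pow_nu 4).const_mul a4
  have j1 : Integrable (fun z : ℝ => a0 * z ^ 0 + a1 * z ^ 1) ν := i0.add i1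
  have j2 : Integrable (fun z : ℝ => a0 * z ^ 0 + a1 * z ^ 1 + a2 * z ^ 2) ν := j1.add i2
  have j3 : Integrable (fun z : ℝ => a0 * z ^ 0 + a1 * z ^ 1 + a2 * z ^ 2 + a3 * z ^ 3) ν :=
    j2.add i3
  rw [h, integral_add j3 i4, integral_add j2 i3, integral_add j1 i2, integral_add i0 i1]
  simp only [integral_const_mul, I, h0]
  ring

lemma map_eq_affine (a : ℝ) (w : ℝ≥0) :
    gaussianReal a w = ν.map (fun z => Real.sqrt w * z + a) := by
  have h1 : ν.map (Real.sqrt w * ·) = gaussianReal 0 w := by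
    show (gaussianReal 0 1).map (Real.sqrt w * ·) = _
    rw [gaussianReal_map_const_mul]
    congr 1
    · ring
    · ext
      simp [Real.sq_sqrt w.2]
  have h2 : (ν.map (Real.sqrt w * ·)).map (· + a) = gaussianReal a w := by
    rw [h1, gaussianReal_map_add_const, zero_add]
  rw [← h2, Measure.map_map (measurable_add_const a) (measurable_const_mul _)]
  rfl

lemma cheb {α : Type*} [MeasurableSpace α] (κ : Measure α) (Y : α → ℝ) {a : ℝ} (ha : 0 < a)
    (hY : Integrable (fun x => Y x ^ 2) κ) :
    κ {x | a ≤ |Y x|} ≤ ENNReal.ofReal ((∫ x, Y x ^ 2 ∂κ) / a ^ 2) := by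
  have hsub : {x | a ≤ |Y x|} ⊆ {x | ENNReal.ofReal (a ^ 2) ≤ ENNReal.ofReal (Y x ^ 2)} := by
    intro x hx
    simp only [Set.mem_setOf_eq] at hx ⊢
    exact ENNReal.ofReal_le_ofReal (by nlinarith [sq_abs (Y x), abs_nonneg (Y x)])
  calc κ {x | a ≤ |Y x|}
      ≤ κ {x | ENNReal.ofReal (a ^ 2) ≤ ENNReal.ofReal (Y x ^ 2)} := measure_mono hsub
    _ ≤ (∫⁻ x, ENNReal.ofReal (Y x ^ 2) ∂κ) / ENNReal.ofReal (a ^ 2) :=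
        meas_ge_le_lintegral_div hY.aemeasurable.ennreal_ofReal
          (ENNReal.ofReal_pos.mpr (by positivity)).ne' ENNReal.ofReal_ne_top
    _ = ENNReal.ofReal ((∫ x, Y x ^ 2 ∂κ) / a ^ 2) := by
        rw [← ofReal_integral_eq_lintegral_ofReal hY
          (Filter.Eventually.of_forall fun x => sq_nonneg _),
          ENNReal.ofReal_div_of_pos (by positivity)]

end Stmt16Aux

open Stmt16Aux

/-- let `X n` have Gaussian law with mean `ρ` and variance `v n → 0`,
let `f n = b₀(X n)² + b₁(X n) + b₂`, and let `f_n^N` have Gaussian law with mean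
`E[f n]` and variance `Var[f n]`. Then `f_n^N − f_n → 0` in probability. -/
theorem stmt16 {Ω : Type*} [MeasurableSpace Ω] (μ : Measure Ω) [IsProbabilityMeasure μ]
    (ρ b₀ b₁ b₂ : ℝ) (X : ℕ → Ω → ℝ) (v : ℕ → NNReal)
    (hX : ∀ n, μ.map (X n) = gaussianReal ρ (v n))
    (hv : Tendsto (fun n => (v n : ℝ)) atTop (nhds 0))
    (fN : ℕ → Ω → ℝ)
    (hfN : ∀ n, μ.map (fN n)
      = gaussianReal (∫ ω, (b₀ * X n ω ^ 2 + b₁ * X n ω + b₂) ∂μ)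
          (variance (fun ω => b₀ * X n ω ^ 2 + b₁ * X n ω + b₂) μ).toNNReal) :
    TendstoInMeasure μ
      (fun n ω => fN n ω - (b₀ * X n ω ^ 2 + b₁ * X n ω + b₂)) atTop 0 := by
  classical
  set g : ℝ → ℝ := fun x => b₀ * x ^ 2 + b₁ * x + b₂ with hg_def
  have hg : Continuous g := by fun_prop
  set c : ℝ := b₀ * ρ ^ 2 + b₁ * ρ + b₂ with hc_def
  set B : ℝ := 2 * b₀ * ρ + b₁ with hB_def
  set u : ℕ → ℝ := fun n => Real.sqrt (v n) with hu_def
  have hXae : ∀ n, AEMeasurable (X n) μ := by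
    intro n
    by_contra h
    have := hX n
    rw [Measure.map_of_not_aemeasurable h] at this
    have h2 := congrArg (fun m : Measure ℝ => m Set.univ) this
    simp [measure_univ] at h2
  have hfNae : ∀ n, AEMeasurable (fN n) μ := by
    intro n
    by_contra h
    have := hfN n
    rw [Measure.map_of_not_aemeasurable h] at this
    have h2 := congrArg (fun m : Measure ℝ => m Set.univ) this
    simp [measure_univ] at h2
  have hu0 : Tendsto u atTop (nhds 0) := by
    have := (Real.continuous_sqrt.tendsto (0 : ℝ)).comp hv
    simpa [hu_def, Function.comp_def] using this
  have hmapX : ∀ n, μ.map (X n) = ν.map (fun z => u n * z + ρ) := by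
    intro n; rw [hX n, map_eq_affine]
  have haff : ∀ n, AEMeasurable (fun z : ℝ => u n * z + ρ) ν :=
    fun n => ((measurable_id.const_mul (u n)).add_const ρ).aemeasurable
  -- transfer of integrals and integrability for test functions of X n
  have htint : ∀ n (φ : ℝ → ℝ), Continuous φ →
      ∫ ω, φ (X n ω) ∂μ = ∫ z, φ (u n * z + ρ) ∂ν := by
    intro n φ hφ
    rw [← integral_map (hXae n) hφ.aestronglyMeasurable, hmapX n,
      integral_map (haff n) hφ.aestronglyMeasurable]
  have htintegrable : ∀ n (φ : ℝ → ℝ), Continuous φ →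
      Integrable (fun z => φ (u n * z + ρ)) ν → Integrable (fun ω => φ (X n ω)) μ := by
    intro n φ hφ h
    have h1 : Integrable φ (μ.map (X n)) := by
      rw [hmapX n]
      exact (integrable_map_measure hφ.aestronglyMeasurable (haff n)).mpr h
    exact (integrable_map_measure hφ.aestronglyMeasurable (hXae n)).mp h1
  set m : ℕ → ℝ := fun n => ∫ ω, (b₀ * X n ω ^ 2 + b₁ * X n ω + b₂) ∂μ with hm_def
  -- value of m n
  have hm : ∀ n, m n = c + B * u n * I 1 + b₀ * u n ^ 2 * I 2 := by
    intro n
    have h1 : m n = ∫ z, g (u n * z + ρ) ∂ν := htint n g hg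
    have h2 : (fun z : ℝ => g (u n * z + ρ))
        = fun z : ℝ => c + (B * u n) * z + (b₀ * u n ^ 2) * z ^ 2 + 0 * z ^ 3 + 0 * z ^ 4 := by
      funext z; simp only [hg_def, hc_def, hB_def]; ring
    rw [h1, h2, integral_poly]
    ring
  have hmc : Tendsto m atTop (nhds c) := by
    have hcont : Continuous fun t : ℝ => c + B * t * I 1 + b₀ * t ^ 2 * I 2 := by fun_prop
    have := (hcont.tendsto 0).comp hu0
    have h2 : Tendsto (fun n => c + B * u n * I 1 + b₀ * u n ^ 2 * I 2) atTop (nhds c) := by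
      simpa [Function.comp_def] using this
    exact h2.congr fun n => (hm n).symm
  -- second moment quantities
  set E : ℕ → ℝ := fun n => ∫ ω, (b₀ * X n ω ^ 2 + b₁ * X n ω + b₂ - c) ^ 2 ∂μ with hE_def
  have hgc : Continuous fun x => (g x - c) ^ 2 := by fun_prop
  have hgsq : Continuous fun x => g x ^ 2 := by fun_prop
  have hpolyc : ∀ n, (fun z : ℝ => (g (u n * z + ρ) - c) ^ 2)
      = fun z : ℝ => 0 + 0 * z + (B ^ 2 * u n ^ 2) * z ^ 2 + (2 * B * b₀ * u n ^ 3) * z ^ 3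
          + (b₀ ^ 2 * u n ^ 4) * z ^ 4 := by
    intro n; funext z; simp only [hg_def, hc_def, hB_def]; ring
  have hE : ∀ n, E n = (B ^ 2 * u n ^ 2) * I 2 + (2 * B * b₀ * u n ^ 3) * I 3
      + (b₀ ^ 2 * u n ^ 4) * I 4 := by
    intro n
    have h1 : E n = ∫ z, (g (u n * z + ρ) - c) ^ 2 ∂ν := htint n _ hgc
    rw [h1, hpolyc n, integral_poly]
    ring
  have hE0 : Tendsto E atTop (nhds 0) := by
    have hcont : Continuous fun t : ℝ => (B ^ 2 * t ^ 2) * I 2 + (2 * B * b₀ * t ^ 3) * I 3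
        + (b₀ ^ 2 * t ^ 4) * I 4 := by fun_prop
    have := (hcont.tendsto 0).comp hu0
    have h2 : Tendsto (fun n => (B ^ 2 * u n ^ 2) * I 2 + (2 * B * b₀ * u n ^ 3) * I 3
        + (b₀ ^ 2 * u n ^ 4) * I 4) atTop (nhds 0) := by simpa [Function.comp_def] using this
    exact h2.congr fun n => (hE n).symm
  -- integrability facts under μ
  have int_f : ∀ n, Integrable (fun ω => b₀ * X n ω ^ 2 + b₁ * X n ω + b₂) μ := by
    intro n
    refine htintegrable n g hg ?_
    have h2 : (fun z : ℝ => g (u n * z + ρ))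
        = fun z : ℝ => c + (B * u n) * z + (b₀ * u n ^ 2) * z ^ 2 + 0 * z ^ 3 + 0 * z ^ 4 := by
      funext z; simp only [hg_def, hc_def, hB_def]; ring
    rw [h2]; exact integrable_poly _ _ _ _ _
  have int_fc : ∀ n, Integrable (fun ω => (b₀ * X n ω ^ 2 + b₁ * X n ω + b₂ - c) ^ 2) μ := by
    intro n
    refine htintegrable n (fun x => (g x - c) ^ 2) hgc ?_
    rw [hpolyc n]; exact integrable_poly _ _ _ _ _
  have int_fsq : ∀ n, Integrable (fun ω => (b₀ * X n ω ^ 2 + b₁ * X n ω + b₂) ^ 2) μ := by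
    intro n
    refine htintegrable n (fun x => g x ^ 2) hgsq ?_
    have h2 : (fun z : ℝ => g (u n * z + ρ) ^ 2)
        = fun z : ℝ => c ^ 2 + (2 * c * B * u n) * z
            + ((B * u n) ^ 2 + 2 * c * b₀ * u n ^ 2) * z ^ 2
            + (2 * B * b₀ * u n ^ 3) * z ^ 3 + (b₀ ^ 2 * u n ^ 4) * z ^ 4 := by
      funext z; simp only [hg_def, hc_def, hB_def]; ring
    rw [h2]; exact integrable_poly _ _ _ _ _
  have hfm : ∀ n, AEStronglyMeasurable (fun ω => b₀ * X n ω ^ 2 + b₁ * X n ω + b₂) μ := by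
    intro n
    exact (hg.measurable.comp_aemeasurable (hXae n)).aestronglyMeasurable
  have hMem : ∀ n, MemLp (fun ω => b₀ * X n ω ^ 2 + b₁ * X n ω + b₂) 2 μ := by
    intro n
    exact (memLp_two_iff_integrable_sq (hfm n)).mpr (int_fsq n)
  -- variance bound
  have hVar_le : ∀ n,
      variance (fun ω => b₀ * X n ω ^ 2 + b₁ * X n ω + b₂) μ ≤ E n := by
    intro n
    rw [variance_eq_sub (hMem n)]
    have hsq : ∫ ω, ((fun ω => b₀ * X n ω ^ 2 + b₁ * X n ω + b₂) ^ 2) ω ∂μ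
        = ∫ ω, (b₀ * X n ω ^ 2 + b₁ * X n ω + b₂) ^ 2 ∂μ := by
      simp [Pi.pow_apply]
    have hsplit : ∫ ω, (b₀ * X n ω ^ 2 + b₁ * X n ω + b₂) ^ 2 ∂μ
        = E n + (2 * c * m n - c ^ 2) := by
      have heq : (fun ω => (b₀ * X n ω ^ 2 + b₁ * X n ω + b₂) ^ 2)
          = fun ω => (b₀ * X n ω ^ 2 + b₁ * X n ω + b₂ - c) ^ 2
              + (2 * c * (b₀ * X n ω ^ 2 + b₁ * X n ω + b₂) - c ^ 2) := by
        funext ω; ring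
      have hi1 : Integrable (fun ω => 2 * c * (b₀ * X n ω ^ 2 + b₁ * X n ω + b₂)) μ :=
        (int_f n).const_mul (2 * c)
      have hi2 : Integrable
          (fun ω => 2 * c * (b₀ * X n ω ^ 2 + b₁ * X n ω + b₂) - c ^ 2) μ :=
        hi1.sub (integrable_const _)
      rw [heq, integral_add (int_fc n) hi2, integral_sub hi1 (integrable_const _),
        integral_const_mul, integral_const]
      simp [hm_def, hE_def, measure_univ]
    have : (μ[(fun ω => b₀ * X n ω ^ 2 + b₁ * X n ω + b₂)]) = m n := rfl
    rw [hsq, hsplit, this]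
    nlinarith [sq_nonneg (m n - c)]
  have hVar0 : Tendsto (fun n =>
      variance (fun ω => b₀ * X n ω ^ 2 + b₁ * X n ω + b₂) μ) atTop (nhds 0) :=
    squeeze_zero (fun n => variance_nonneg _ _) hVar_le hE0
  set s : ℕ → ℝ≥0 := fun n =>
    (variance (fun ω => b₀ * X n ω ^ 2 + b₁ * X n ω + b₂) μ).toNNReal with hs_def
  have hs0 : Tendsto (fun n => (s n : ℝ)) atTop (nhds 0) := by
    have : (fun n => (s n : ℝ)) = fun n =>
        variance (fun ω => b₀ * X n ω ^ 2 + b₁ * X n ω + b₂) μ := by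
      funext n; exact Real.coe_toNNReal _ (variance_nonneg _ _)
    rw [this]; exact hVar0
  set t : ℕ → ℝ := fun n => Real.sqrt (s n) with ht_def
  have hmapfN : ∀ n, μ.map (fN n) = ν.map (fun z => t n * z + m n) := by
    intro n; rw [hfN n, map_eq_affine]
  have hafft : ∀ n, AEMeasurable (fun z : ℝ => t n * z + m n) ν :=
    fun n => ((measurable_id.const_mul (t n)).add_const (m n)).aemeasurable
  -- second moment of fN around m n
  have int_fN : ∀ n, Integrable (fun ω => (fN n ω - m n) ^ 2) μ := by
    intro n
    have hφ : Continuous fun x : ℝ => (x - m n) ^ 2 := by fun_prop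
    have h1 : Integrable (fun x : ℝ => (x - m n) ^ 2) (μ.map (fN n)) := by
      rw [hmapfN n]
      refine (integrable_map_measure hφ.aestronglyMeasurable (hafft n)).mpr ?_
      show Integrable (fun z : ℝ => (t n * z + m n - m n) ^ 2) ν
      have h2 : (fun z : ℝ => (t n * z + m n - m n) ^ 2)
          = fun z : ℝ => 0 + 0 * z + (t n ^ 2) * z ^ 2 + 0 * z ^ 3 + 0 * z ^ 4 := by
        funext z; ring
      rw [h2]; exact integrable_poly _ _ _ _ _
    exact (integrable_map_measure hφ.aestronglyMeasurable (hfNae n)).mp h1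
  have hfNint : ∀ n, ∫ ω, (fN n ω - m n) ^ 2 ∂μ = (s n : ℝ) * I 2 := by
    intro n
    have hφ : Continuous fun x : ℝ => (x - m n) ^ 2 := by fun_prop
    rw [← integral_map (hfNae n) hφ.aestronglyMeasurable, hmapfN n,
      integral_map (hafft n) hφ.aestronglyMeasurable]
    have h2 : (fun z : ℝ => (t n * z + m n - m n) ^ 2)
        = fun z : ℝ => 0 + 0 * z + (t n ^ 2) * z ^ 2 + 0 * z ^ 3 + 0 * z ^ 4 := by
      funext z; ring
    rw [h2, integral_poly]
    have : t n ^ 2 = (s n : ℝ) := Real.sq_sqrt (s n).2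
    rw [this]; ring
  -- final: convergence in measure
  rw [tendstoInMeasure_iff_dist]
  intro ε hε
  have hε3 : (0 : ℝ) < ε / 3 := by linarith
  have hupper : Tendsto (fun n => ENNReal.ofReal ((s n : ℝ) * I 2 / (ε / 3) ^ 2)
      + ENNReal.ofReal (E n / (ε / 3) ^ 2)) atTop (nhds 0) := by
    have h1 : Tendsto (fun n => (s n : ℝ) * I 2 / (ε / 3) ^ 2) atTop (nhds 0) := by
      have := (hs0.mul_const (I 2)).div_const ((ε / 3) ^ 2)
      simpa using this
    have h2 : Tendsto (fun n => E n / (ε / 3) ^ 2) atTop (nhds 0) := by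
      have := hE0.div_const ((ε / 3) ^ 2)
      simpa using this
    have h3 := (ENNReal.tendsto_ofReal h1).add (ENNReal.tendsto_ofReal h2)
    simpa using h3
  have hev : ∀ᶠ n in atTop, |m n - c| < ε / 3 := by
    have := Metric.tendsto_nhds.mp hmc (ε / 3) hε3
    simpa [Real.dist_eq] using this
  refine tendsto_of_tendsto_of_tendsto_of_le_of_le'
    (tendsto_const_nhds : Tendsto (fun _ : ℕ => (0 : ℝ≥0∞)) atTop (nhds 0)) hupper
    (Filter.Eventually.of_forall fun n => zero_le) ?_
  filter_upwards [hev] with n hn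
  have hsubset : {ω | ε ≤ dist (fN n ω - (b₀ * X n ω ^ 2 + b₁ * X n ω + b₂)) ((0 : Ω → ℝ) ω)}
      ⊆ {ω | ε / 3 ≤ |fN n ω - m n|}
        ∪ {ω | ε / 3 ≤ |b₀ * X n ω ^ 2 + b₁ * X n ω + b₂ - c|} := by
    intro ω hω
    simp only [Set.mem_setOf_eq, Pi.zero_apply, Real.dist_eq, sub_zero] at hω
    by_contra h
    simp only [Set.mem_union, Set.mem_setOf_eq, not_or, not_le] at h
    obtain ⟨h1, h2⟩ := h
    have t1 : |fN n ω - (b₀ * X n ω ^ 2 + b₁ * X n ω + b₂)|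
        ≤ |fN n ω - m n| + |m n - c| + |c - (b₀ * X n ω ^ 2 + b₁ * X n ω + b₂)| := by
      have := abs_sub_le (fN n ω) (m n) (b₀ * X n ω ^ 2 + b₁ * X n ω + b₂)
      have := abs_sub_le (m n) c (b₀ * X n ω ^ 2 + b₁ * X n ω + b₂)
      calc |fN n ω - (b₀ * X n ω ^ 2 + b₁ * X n ω + b₂)|
          ≤ |fN n ω - m n| + |m n - (b₀ * X n ω ^ 2 + b₁ * X n ω + b₂)| :=
            abs_sub_le _ _ _
        _ ≤ |fN n ω - m n| + (|m n - c| + |c - (b₀ * X n ω ^ 2 + b₁ * X n ω + b₂)|) := by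
            exact add_le_add le_rfl (abs_sub_le _ _ _)
        _ = _ := by ring
    rw [abs_sub_comm c] at t1
    linarith
  calc μ {ω | ε ≤ dist (fN n ω - (b₀ * X n ω ^ 2 + b₁ * X n ω + b₂)) ((0 : Ω → ℝ) ω)}
      ≤ μ ({ω | ε / 3 ≤ |fN n ω - m n|}
          ∪ {ω | ε / 3 ≤ |b₀ * X n ω ^ 2 + b₁ * X n ω + b₂ - c|}) := measure_mono hsubset
    _ ≤ μ {ω | ε / 3 ≤ |fN n ω - m n|}
        + μ {ω | ε / 3 ≤ |b₀ * X n ω ^ 2 + b₁ * X n ω + b₂ - c|} := measure_union_le _ _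
    _ ≤ ENNReal.ofReal ((s n : ℝ) * I 2 / (ε / 3) ^ 2) + ENNReal.ofReal (E n / (ε / 3) ^ 2) := by
        gcongr
        · have := cheb μ (fun ω => fN n ω - m n) hε3 (int_fN n)
          rw [hfNint n] at this
          exact this
        · exact cheb μ (fun ω => b₀ * X n ω ^ 2 + b₁ * X n ω + b₂ - c) hε3 (int_fc n)
end

section
/- Let ρ, ρ', b₀, b₁, b₂, b₃ ∈ ℝ. For each n, let X_n and Y_n be independent real random variables (all on a common probability space), with the law of X_n Gaussian with mean ρ and variance σ_n², and the law of Y_n Gaussian with mean ρ' and variance τ_n², where σ_n² → 0 and τ_n² → 0 as n → ∞. Set f_n = b₀X_nY_n + b₁X_n + b₂Y_n + b₃, and let f_n^N be any real random variable on the same probability space whose law is Gaussian with mean E[f_n] and variance Var[f_n]. Then f_n^N − f_n → 0 in probability as n → ∞. -/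
open MeasureTheory ProbabilityTheory Filter

namespace Stmt17Aux

open Real Set NNReal ENNReal

lemma vr_pos {v : ℝ≥0} (hv : v ≠ 0) : 0 < (v : ℝ) :=
  NNReal.coe_pos.mpr (zero_lt_iff.mpr hv)

lemma gaussianPDFReal_zero_eq {v : ℝ≥0} (hv : v ≠ 0) (x : ℝ) :
    gaussianPDFReal 0 v x
      = (Real.sqrt (2 * π * v))⁻¹ * Real.exp (-(2 * (v:ℝ))⁻¹ * x ^ 2) := by
  have hv' : (0:ℝ) < v := vr_pos hv
  rw [gaussianPDFReal]
  congr 1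
  rw [sub_zero]
  congr 1
  field_simp

lemma integrable_pow_mul_gauss {b : ℝ} (hb : 0 < b) (n : ℕ) :
    Integrable (fun x : ℝ => x ^ n * Real.exp (-b * x ^ 2)) := by
  simpa [Real.rpow_natCast] using
    integrable_rpow_mul_exp_neg_mul_sq hb (s := (n : ℝ))
      (neg_one_lt_zero.trans_le (Nat.cast_nonneg n))

lemma integral_Ioi_sq_gauss {b : ℝ} (hb : 0 < b) :
    ∫ x in Ioi (0:ℝ), x ^ 2 * Real.exp (-b * x ^ 2) = b ^ (-(3:ℝ)/2) * Real.sqrt π / 4 := by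
  have h := integral_rpow_mul_exp_neg_mul_rpow (p := 2) (q := 2) (b := b) two_pos
    (by norm_num) hb
  rw [show ((2:ℝ)+1)/2 = 1/2 + 1 by norm_num, Real.Gamma_add_one (by norm_num),
    Real.Gamma_one_half_eq] at h
  have hcong : (∫ x in Ioi (0:ℝ), x ^ 2 * Real.exp (-b * x ^ 2))
      = ∫ x in Ioi (0:ℝ), x ^ (2:ℝ) * Real.exp (-b * x ^ (2:ℝ)) := by
    refine setIntegral_congr_fun measurableSet_Ioi (fun x hx => ?_)
    rw [show ((2:ℝ)) = ((2:ℕ):ℝ) by norm_num, Real.rpow_natCast]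
  rw [hcong, h]
  rw [show (-((2:ℝ)+1)/2) = -(3:ℝ)/2 by norm_num]
  ring

lemma integral_sq_gauss {b : ℝ} (hb : 0 < b) :
    ∫ x : ℝ, x ^ 2 * Real.exp (-b * x ^ 2) = b ^ (-(3:ℝ)/2) * Real.sqrt π / 2 := by
  have hint := integrable_pow_mul_gauss hb 2
  have hsplit := integral_add_compl (measurableSet_Ioi (a := (0:ℝ))) hint
  rw [compl_Ioi] at hsplit
  have h2 : (∫ x in Iic (0:ℝ), x ^ 2 * Real.exp (-b * x ^ 2))
      = ∫ x in Ioi (0:ℝ), x ^ 2 * Real.exp (-b * x ^ 2) := by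
    rw [← neg_zero, ← integral_comp_neg_Ioi]
    simp
  rw [integral_Ioi_sq_gauss hb] at hsplit h2
  linarith

lemma integral_gauss0 {v : ℝ≥0} (hv : v ≠ 0) (g : ℝ → ℝ) :
    ∫ x, g x ∂(gaussianReal 0 v) = ∫ x, gaussianPDFReal 0 v x * g x := by
  rw [gaussianReal_of_var_ne_zero 0 hv, gaussianPDF_def]
  rw [show (fun x => ENNReal.ofReal (gaussianPDFReal 0 v x))
      = (fun x => ((gaussianPDFReal 0 v x).toNNReal : ℝ≥0∞)) from rfl]
  rw [integral_withDensity_eq_integral_smul ((measurable_gaussianPDFReal 0 v).real_toNNReal) g]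
  congr 1; funext x
  rw [NNReal.smul_def, smul_eq_mul, Real.coe_toNNReal _ (gaussianPDFReal_nonneg 0 v x)]

lemma integral_id_gauss0 {v : ℝ≥0} : ∫ x, x ∂(gaussianReal 0 v) = 0 := by
  by_cases hv : v = 0
  · simp [hv, integral_dirac]
  · rw [integral_gauss0 hv]
    have h1 : (∫ x : ℝ, gaussianPDFReal 0 v (-x) * (-x)) = ∫ x : ℝ, gaussianPDFReal 0 v x * x :=
      integral_neg_eq_self (fun x : ℝ => gaussianPDFReal 0 v x * x) volume
    have h2 : ∀ x : ℝ, gaussianPDFReal 0 v (-x) * (-x) = -(gaussianPDFReal 0 v x * x) := by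
      intro x
      rw [gaussianPDFReal_zero_eq hv, gaussianPDFReal_zero_eq hv, neg_sq]
      ring
    simp_rw [h2, integral_neg] at h1
    linarith

lemma integral_sq_gauss0 {v : ℝ≥0} : ∫ x, x ^ 2 ∂(gaussianReal 0 v) = (v : ℝ) := by
  by_cases hv : v = 0
  · simp [hv, integral_dirac]
  · have hv' := vr_pos hv
    have hb : 0 < (2 * (v:ℝ))⁻¹ := by positivity
    rw [integral_gauss0 hv]
    have hpt : ∀ x : ℝ, gaussianPDFReal 0 v x * x ^ 2
        = (Real.sqrt (2 * π * v))⁻¹ * (x ^ 2 * Real.exp (-(2 * (v:ℝ))⁻¹ * x ^ 2)) := by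
      intro x; rw [gaussianPDFReal_zero_eq hv]; ring
    simp_rw [hpt, integral_const_mul, integral_sq_gauss hb]
    rw [Real.inv_rpow (by positivity), show (-(3:ℝ)/2) = -((3:ℝ)/2) by norm_num,
      Real.rpow_neg (by positivity), inv_inv,
      show (3:ℝ)/2 = 1 + 1/2 by norm_num, Real.rpow_add (by positivity), Real.rpow_one,
      ← Real.sqrt_eq_rpow,
      show 2 * π * (v:ℝ) = (2*(v:ℝ)) * π by ring, Real.sqrt_mul (by positivity)]
    have hs1 : Real.sqrt (2*(v:ℝ)) ≠ 0 := by positivity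
    have hs2 : Real.sqrt π ≠ 0 := by positivity
    field_simp

lemma memℒp_id_gauss0 {v : ℝ≥0} : MemLp (id : ℝ → ℝ) 2 (gaussianReal 0 v) := by
  by_cases hv : v = 0
  · rw [hv, gaussianReal_zero_var]
    exact (memLp_congr_ae (ae_eq_dirac (id : ℝ → ℝ))).mpr (memLp_const _)
  · have hv' := vr_pos hv
    have hb : 0 < (2 * (v:ℝ))⁻¹ := by positivity
    rw [memLp_two_iff_integrable_sq aestronglyMeasurable_id]
    rw [gaussianReal_of_var_ne_zero 0 hv, gaussianPDF_def]
    rw [integrable_withDensity_iff ((measurable_gaussianPDFReal 0 v).ennreal_ofReal)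
      (ae_of_all _ fun x => ENNReal.ofReal_lt_top)]
    have hpt : (fun x : ℝ => (id : ℝ → ℝ) x ^ 2 * (ENNReal.ofReal (gaussianPDFReal 0 v x)).toReal)
        = fun x : ℝ => (Real.sqrt (2 * π * (v:ℝ)))⁻¹
            * (x ^ 2 * Real.exp (-(2 * (v:ℝ))⁻¹ * x ^ 2)) := by
      funext x
      rw [ENNReal.toReal_ofReal (gaussianPDFReal_nonneg 0 v x), gaussianPDFReal_zero_eq hv]
      simp only [id_eq]
      ring
    rw [hpt]
    exact (integrable_pow_mul_gauss hb 2).const_mul _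

lemma gaussianReal_eq_map (m : ℝ) (v : ℝ≥0) :
    gaussianReal m v = (gaussianReal 0 v).map (· + m) := by
  rw [gaussianReal_map_add_const m, zero_add]

lemma memℒp_id_gauss (m : ℝ) (v : ℝ≥0) : MemLp (id : ℝ → ℝ) 2 (gaussianReal m v) := by
  rw [gaussianReal_eq_map m v,
    memLp_map_measure_iff aestronglyMeasurable_id (measurable_add_const m).aemeasurable]
  exact memℒp_id_gauss0.add (memLp_const m)

lemma integral_id_gauss (m : ℝ) (v : ℝ≥0) : ∫ x, x ∂(gaussianReal m v) = m := by
  rw [gaussianReal_eq_map m v,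
    integral_map (f := fun y : ℝ => y) (measurable_add_const m).aemeasurable
      measurable_id'.aestronglyMeasurable]
  have hid : Integrable (fun x : ℝ => x) (gaussianReal 0 v) :=
    (memℒp_id_gauss0.integrable one_le_two).congr (ae_of_all _ fun x => rfl)
  rw [integral_add hid (integrable_const m)]
  have h0 : (∫ x : ℝ, x ∂(gaussianReal 0 v)) = 0 := integral_id_gauss0
  simp [h0]

lemma integral_sq_gauss' (m : ℝ) (v : ℝ≥0) :
    ∫ x, (x - m) ^ 2 ∂(gaussianReal m v) = (v:ℝ) := by
  rw [gaussianReal_eq_map m v,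
    integral_map (measurable_add_const m).aemeasurable
      ((measurable_id'.sub_const m).pow_const 2).aestronglyMeasurable]
  simp only [add_sub_cancel_right]
  exact integral_sq_gauss0

section RV
variable {Ω : Type*} [MeasurableSpace Ω] {μ : Measure Ω} {Z : Ω → ℝ} {m : ℝ} {v : ℝ≥0}

lemma rv_aemeasurable (h : μ.map Z = gaussianReal m v) : AEMeasurable Z μ :=
  aemeasurable_of_map_neZero (by rw [h]; infer_instance)

lemma rv_memℒp (h : μ.map Z = gaussianReal m v) : MemLp Z 2 μ := by
  have h2 : MemLp (id : ℝ → ℝ) 2 (μ.map Z) := h ▸ memℒp_id_gauss m v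
  exact (memLp_map_measure_iff aestronglyMeasurable_id (rv_aemeasurable h)).mp h2

lemma rv_integral (h : μ.map Z = gaussianReal m v) : ∫ ω, Z ω ∂μ = m := by
  have := integral_map (rv_aemeasurable h) (f := fun y : ℝ => y)
    measurable_id'.aestronglyMeasurable
  rw [h, integral_id_gauss] at this
  exact this.symm

lemma rv_integral_sq (h : μ.map Z = gaussianReal m v) : ∫ ω, (Z ω - m) ^ 2 ∂μ = (v:ℝ) := by
  have := integral_map (rv_aemeasurable h) (f := fun y : ℝ => (y - m) ^ 2)
    ((measurable_id'.sub_const m).pow_const 2).aestronglyMeasurable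
  rw [h, integral_sq_gauss'] at this
  exact this.symm

lemma rv_sub_const (h : μ.map Z = gaussianReal m v) :
    μ.map (fun ω => Z ω - m) = gaussianReal 0 v := by
  have hZ := rv_aemeasurable h
  have heq : (fun ω => Z ω - m) = (fun x => x + (-m)) ∘ Z := by
    funext ω; simp [sub_eq_add_neg]
  rw [heq, ← AEMeasurable.map_map_of_aemeasurable (measurable_add_const (-m)).aemeasurable hZ,
    h, gaussianReal_map_add_const, add_neg_cancel]

end RV

section Main
variable {Ω : Type*} [MeasurableSpace Ω] {μ : Measure Ω} [IsProbabilityMeasure μ]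

lemma variance_eq_integral_sub {Z : Ω → ℝ} (hZ : MemLp Z 2 μ) {c : ℝ}
    (hc : ∫ ω, Z ω ∂μ = c) :
    variance Z μ = ∫ ω, (Z ω - c) ^ 2 ∂μ := by
  subst hc
  exact variance_eq_integral hZ.aemeasurable

lemma tim_of_chebyshev {Z : ℕ → Ω → ℝ} {c : ℝ} {B : ℕ → ℝ}
    (hZ : ∀ n, MemLp (Z n) 2 μ) (hmean : ∀ n, ∫ ω, Z n ω ∂μ = c)
    (hvar : ∀ n, variance (Z n) μ ≤ B n)
    (hB : Tendsto B atTop (nhds 0)) :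
    TendstoInMeasure μ Z atTop (fun _ => c) := by
  rw [tendstoInMeasure_iff_dist]
  intro ε hε
  have hbound : ∀ n, μ {x | ε ≤ dist (Z n x) ((fun _ => c) x)}
      ≤ ENNReal.ofReal (B n / ε ^ 2) := by
    intro n
    have h1 := meas_ge_le_variance_div_sq (hZ n) hε
    rw [hmean n] at h1
    have hset : {x | ε ≤ dist (Z n x) ((fun _ => c) x)} = {ω | ε ≤ |Z n ω - c|} := by
      ext x; simp [Real.dist_eq]
    rw [hset]
    refine h1.trans ?_
    gcongr
    exact hvar n
  refine tendsto_of_tendsto_of_tendsto_of_le_of_le tendsto_const_nhds ?_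
    (fun n => zero_le) hbound
  have h2 : Tendsto (fun n => B n / ε ^ 2) atTop (nhds 0) := by
    simpa using hB.div_const (ε ^ 2)
  simpa using ENNReal.tendsto_ofReal h2

omit [IsProbabilityMeasure μ] in
lemma tim_sub {F G : ℕ → Ω → ℝ} {c : ℝ}
    (hF : TendstoInMeasure μ F atTop (fun _ => c))
    (hG : TendstoInMeasure μ G atTop (fun _ => c)) :
    TendstoInMeasure μ (fun n ω => F n ω - G n ω) atTop 0 := by
  rw [tendstoInMeasure_iff_dist] at hF hG ⊢
  intro ε hε
  have hε2 : 0 < ε / 2 := by positivity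
  have hFs := hF (ε / 2) hε2
  have hGs := hG (ε / 2) hε2
  have hsub : ∀ n, μ {x | ε ≤ dist (F n x - G n x) ((0 : Ω → ℝ) x)}
      ≤ μ {x | ε / 2 ≤ dist (F n x) ((fun _ => c) x)}
        + μ {x | ε / 2 ≤ dist (G n x) ((fun _ => c) x)} := by
    intro n
    refine (measure_mono ?_).trans (measure_union_le _ _)
    intro x hx
    simp only [Set.mem_setOf_eq, Set.mem_union, Pi.zero_apply, Real.dist_eq, sub_zero] at *
    by_contra hcon
    push_neg at hcon
    obtain ⟨h1, h2⟩ := hcon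
    have : |F n x - G n x| < ε := by
      calc |F n x - G n x| ≤ |F n x - c| + |c - G n x| := abs_sub_le _ _ _
        _ = |F n x - c| + |G n x - c| := by rw [abs_sub_comm c]
        _ < ε := by linarith
    linarith
  refine tendsto_of_tendsto_of_tendsto_of_le_of_le tendsto_const_nhds ?_
    (fun n => zero_le) hsub
  simpa using hFs.add hGs

lemma three_sq (x y z : ℝ) : (x + y + z) ^ 2 ≤ 3 * (x ^ 2 + y ^ 2 + z ^ 2) := by
  nlinarith [sq_nonneg (x - y), sq_nonneg (y - z), sq_nonneg (x - z)]

lemma aux_main (b₀ a₁ a₂ c : ℝ) (U V : Ω → ℝ) (u t : ℝ≥0)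
    (hU : μ.map U = gaussianReal 0 u) (hV : μ.map V = gaussianReal 0 t)
    (hUV : IndepFun U V μ) :
    MemLp (fun ω => b₀ * (U ω * V ω) + a₁ * U ω + a₂ * V ω + c) 2 μ ∧
    (∫ ω, (b₀ * (U ω * V ω) + a₁ * U ω + a₂ * V ω + c) ∂μ = c) ∧
    variance (fun ω => b₀ * (U ω * V ω) + a₁ * U ω + a₂ * V ω + c) μ
      ≤ 3 * (b₀ ^ 2 * ((u:ℝ) * (t:ℝ)) + a₁ ^ 2 * (u:ℝ) + a₂ ^ 2 * (t:ℝ)) := by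
  have hU2 : MemLp U 2 μ := rv_memℒp hU
  have hV2 : MemLp V 2 μ := rv_memℒp hV
  have hUint : Integrable U μ := hU2.integrable one_le_two
  have hVint : Integrable V μ := hV2.integrable one_le_two
  have hEU : ∫ ω, U ω ∂μ = 0 := rv_integral hU
  have hEV : ∫ ω, V ω ∂μ = 0 := rv_integral hV
  have hEU2 : ∫ ω, U ω ^ 2 ∂μ = (u:ℝ) := by
    have := rv_integral_sq hU; simpa using this
  have hEV2 : ∫ ω, V ω ^ 2 ∂μ = (t:ℝ) := by
    have := rv_integral_sq hV; simpa using this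
  have hUsq_int : Integrable (fun ω => U ω ^ 2) μ := by
    exact (memLp_two_iff_integrable_sq hU2.aestronglyMeasurable).mp hU2
  have hVsq_int : Integrable (fun ω => V ω ^ 2) μ := by
    exact (memLp_two_iff_integrable_sq hV2.aestronglyMeasurable).mp hV2
  have hUVi2 : IndepFun (fun ω => U ω ^ 2) (fun ω => V ω ^ 2) μ := by
    exact hUV.comp (measurable_id.pow_const 2) (measurable_id.pow_const 2)
  have hUVint : Integrable (fun ω => U ω * V ω) μ := by
    exact hUV.integrable_mul hUint hVint
  have hEUV : (∫ ω, U ω * V ω ∂μ) = 0 := by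
    have h : (∫ ω, U ω * V ω ∂μ) = (∫ ω, U ω ∂μ) * ∫ ω, V ω ∂μ :=
      hUV.integral_mul_eq_mul_integral hUint.1 hVint.1
    rw [hEU, hEV] at h
    simpa using h
  have hU2V2_int : Integrable (fun ω => U ω ^ 2 * V ω ^ 2) μ := by
    exact hUVi2.integrable_mul hUsq_int hVsq_int
  have hEU2V2 : (∫ ω, U ω ^ 2 * V ω ^ 2 ∂μ) = (u:ℝ) * (t:ℝ) := by
    have h : (∫ ω, U ω ^ 2 * V ω ^ 2 ∂μ) = (∫ ω, U ω ^ 2 ∂μ) * ∫ ω, V ω ^ 2 ∂μ :=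
      hUVi2.integral_mul_eq_mul_integral hUsq_int.1 hVsq_int.1
    rw [hEU2, hEV2] at h
    exact h
  have hUVmem : MemLp (fun ω => U ω * V ω) 2 μ := by
    refine (memLp_two_iff_integrable_sq (hUint.1.mul hVint.1)).mpr ?_
    exact hU2V2_int.congr (ae_of_all _ fun ω => by
      simp only [Pi.mul_apply, Pi.pow_apply]
      ring)
  have hfmem : MemLp (fun ω => b₀ * (U ω * V ω) + a₁ * U ω + a₂ * V ω + c) 2 μ := by
    exact (((hUVmem.const_mul b₀).add (hU2.const_mul a₁)).add (hV2.const_mul a₂)).add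
      (memLp_const c)
  have hint1 : Integrable (fun ω => b₀ * (U ω * V ω)) μ := hUVint.const_mul b₀
  have hint2 : Integrable (fun ω => a₁ * U ω) μ := hUint.const_mul a₁
  have hint3 : Integrable (fun ω => a₂ * V ω) μ := hVint.const_mul a₂
  have hA : Integrable (fun ω => b₀ * (U ω * V ω) + a₁ * U ω) μ := by exact hint1.add hint2
  have hB : Integrable (fun ω => b₀ * (U ω * V ω) + a₁ * U ω + a₂ * V ω) μ := by
    exact hA.add hint3
  have hfmean : (∫ ω, (b₀ * (U ω * V ω) + a₁ * U ω + a₂ * V ω + c) ∂μ) = c := by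
    rw [integral_add hB (integrable_const c), integral_add hA hint3, integral_add hint1 hint2,
      integral_const_mul, integral_const_mul, integral_const_mul, hEUV, hEU, hEV]
    simp
  refine ⟨hfmem, hfmean, ?_⟩
  have hveq := variance_eq_integral_sub hfmem hfmean
  rw [hveq]
  have hLint : Integrable
      (fun ω => ((b₀ * (U ω * V ω) + a₁ * U ω + a₂ * V ω + c) - c) ^ 2) μ := by
    have h := (memLp_two_iff_integrable_sq
      (hfmem.sub (memLp_const c)).aestronglyMeasurable).mp (hfmem.sub (memLp_const c))
    exact h.congr (ae_of_all _ fun ω => rfl)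
  have hRint : Integrable
      (fun ω => 3 * (b₀ ^ 2 * (U ω ^ 2 * V ω ^ 2) + a₁ ^ 2 * U ω ^ 2 + a₂ ^ 2 * V ω ^ 2)) μ := by
    exact (((hU2V2_int.const_mul _).add (hUsq_int.const_mul _)).add
      (hVsq_int.const_mul _)).const_mul 3
  have hptw : ∀ ω, ((b₀ * (U ω * V ω) + a₁ * U ω + a₂ * V ω + c) - c) ^ 2
      ≤ 3 * (b₀ ^ 2 * (U ω ^ 2 * V ω ^ 2) + a₁ ^ 2 * U ω ^ 2 + a₂ ^ 2 * V ω ^ 2) := by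
    intro ω
    calc ((b₀ * (U ω * V ω) + a₁ * U ω + a₂ * V ω + c) - c) ^ 2
        = (b₀ * (U ω * V ω) + a₁ * U ω + a₂ * V ω) ^ 2 := by ring
      _ ≤ 3 * ((b₀ * (U ω * V ω)) ^ 2 + (a₁ * U ω) ^ 2 + (a₂ * V ω) ^ 2) := three_sq _ _ _
      _ = 3 * (b₀ ^ 2 * (U ω ^ 2 * V ω ^ 2) + a₁ ^ 2 * U ω ^ 2 + a₂ ^ 2 * V ω ^ 2) := by ring
  have hRval : (∫ ω, 3 * (b₀ ^ 2 * (U ω ^ 2 * V ω ^ 2) + a₁ ^ 2 * U ω ^ 2 + a₂ ^ 2 * V ω ^ 2) ∂μ)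
      = 3 * (b₀ ^ 2 * ((u:ℝ) * (t:ℝ)) + a₁ ^ 2 * (u:ℝ) + a₂ ^ 2 * (t:ℝ)) := by
    rw [integral_const_mul,
      integral_add (by exact (hU2V2_int.const_mul _).add (hUsq_int.const_mul _))
        (hVsq_int.const_mul _),
      integral_add (hU2V2_int.const_mul _) (hUsq_int.const_mul _),
      integral_const_mul, integral_const_mul, integral_const_mul, hEU2V2, hEU2, hEV2]
  calc (∫ ω, ((b₀ * (U ω * V ω) + a₁ * U ω + a₂ * V ω + c) - c) ^ 2 ∂μ)
      ≤ ∫ ω, 3 * (b₀ ^ 2 * (U ω ^ 2 * V ω ^ 2) + a₁ ^ 2 * U ω ^ 2 + a₂ ^ 2 * V ω ^ 2) ∂μ :=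
        integral_mono hLint hRint hptw
    _ = _ := hRval

end Main
end Stmt17Aux
/-- let `X n`, `Y n` be independent with Gaussian laws of means `ρ, ρ'`
and variances `σ n → 0`, `τ n → 0`, let `f n = b₀(X n)(Y n) + b₁(X n) + b₂(Y n) + b₃`,
and let `f_n^N` have Gaussian law with mean `E[f n]` and variance `Var[f n]`.
Then `f_n^N − f_n → 0` in probability. -/
theorem stmt17 {Ω : Type*} [MeasurableSpace Ω] (μ : Measure Ω) [IsProbabilityMeasure μ]
    (ρ ρ' b₀ b₁ b₂ b₃ : ℝ) (X Y : ℕ → Ω → ℝ) (σ τ : ℕ → NNReal)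
    (hX : ∀ n, μ.map (X n) = gaussianReal ρ (σ n))
    (hY : ∀ n, μ.map (Y n) = gaussianReal ρ' (τ n))
    (hindep : ∀ n, IndepFun (X n) (Y n) μ)
    (hσ : Tendsto (fun n => (σ n : ℝ)) atTop (nhds 0))
    (hτ : Tendsto (fun n => (τ n : ℝ)) atTop (nhds 0))
    (fN : ℕ → Ω → ℝ)
    (hfN : ∀ n, μ.map (fN n)
      = gaussianReal (∫ ω, (b₀ * X n ω * Y n ω + b₁ * X n ω + b₂ * Y n ω + b₃) ∂μ)
          (variance (fun ω => b₀ * X n ω * Y n ω + b₁ * X n ω + b₂ * Y n ω + b₃) μ).toNNReal) :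
    TendstoInMeasure μ
      (fun n ω => fN n ω - (b₀ * X n ω * Y n ω + b₁ * X n ω + b₂ * Y n ω + b₃))
      atTop 0 := by
  set c : ℝ := b₀ * ρ * ρ' + b₁ * ρ + b₂ * ρ' + b₃ with hcdef
  set B : ℕ → ℝ := fun n =>
    3 * (b₀ ^ 2 * ((σ n : ℝ) * (τ n : ℝ)) + (b₁ + b₀ * ρ') ^ 2 * (σ n : ℝ)
      + (b₂ + b₀ * ρ) ^ 2 * (τ n : ℝ)) with hBdef
  have key : ∀ n,
      MemLp (fun ω => b₀ * X n ω * Y n ω + b₁ * X n ω + b₂ * Y n ω + b₃) 2 μ ∧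
      (∫ ω, (b₀ * X n ω * Y n ω + b₁ * X n ω + b₂ * Y n ω + b₃) ∂μ = c) ∧
      variance (fun ω => b₀ * X n ω * Y n ω + b₁ * X n ω + b₂ * Y n ω + b₃) μ ≤ B n := by
    intro n
    have hUlaw : μ.map (fun ω => X n ω - ρ) = gaussianReal 0 (σ n) :=
      Stmt17Aux.rv_sub_const (hX n)
    have hVlaw : μ.map (fun ω => Y n ω - ρ') = gaussianReal 0 (τ n) :=
      Stmt17Aux.rv_sub_const (hY n)
    have hUVindep : IndepFun (fun ω => X n ω - ρ) (fun ω => Y n ω - ρ') μ := by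
      exact (hindep n).comp (measurable_id.sub_const ρ) (measurable_id.sub_const ρ')
    obtain ⟨hmem, hmean, hvar⟩ := Stmt17Aux.aux_main b₀ (b₁ + b₀ * ρ') (b₂ + b₀ * ρ)
      c (fun ω => X n ω - ρ) (fun ω => Y n ω - ρ') (σ n) (τ n) hUlaw hVlaw hUVindep
    have hfeq : (fun ω => b₀ * X n ω * Y n ω + b₁ * X n ω + b₂ * Y n ω + b₃)
        = fun ω => b₀ * ((X n ω - ρ) * (Y n ω - ρ')) + (b₁ + b₀ * ρ') * (X n ω - ρ)
            + (b₂ + b₀ * ρ) * (Y n ω - ρ') + c := by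
      funext ω
      rw [hcdef]
      ring
    rw [hfeq]
    exact ⟨hmem, hmean, hvar⟩
  have hmem := fun n => (key n).1
  have hmean := fun n => (key n).2.1
  have hvar := fun n => (key n).2.2
  have hB : Tendsto B atTop (nhds 0) := by
    rw [hBdef]
    have h := ((((hσ.mul hτ).const_mul (b₀ ^ 2)).add
      (hσ.const_mul ((b₁ + b₀ * ρ') ^ 2))).add
      (hτ.const_mul ((b₂ + b₀ * ρ) ^ 2))).const_mul (3 : ℝ)
    simpa using h
  have hfNmem : ∀ n, MemLp (fN n) 2 μ := fun n => Stmt17Aux.rv_memℒp (hfN n)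
  have hfNmean : ∀ n, ∫ ω, fN n ω ∂μ = c := by
    intro n
    have h := Stmt17Aux.rv_integral (hfN n)
    rwa [hmean n] at h
  have hfNvar : ∀ n, variance (fN n) μ ≤ B n := by
    intro n
    have h1 := Stmt17Aux.variance_eq_integral_sub (hfNmem n) (Stmt17Aux.rv_integral (hfN n))
    have h2 := Stmt17Aux.rv_integral_sq (hfN n)
    rw [h2] at h1
    rw [h1, Real.coe_toNNReal _ (variance_nonneg _ _)]
    exact hvar n
  have htF := Stmt17Aux.tim_of_chebyshev hfNmem hfNmean hfNvar hB
  have htG := Stmt17Aux.tim_of_chebyshev hmem hmean hvar hB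
  exact Stmt17Aux.tim_sub htF htG
end
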